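/- arXiv:1810.10859 — 2 statements merged into one kernel-verified Lean document; each statement's English description precedes it below -/
import Mathlib

section
/- For all mass functions m1, m2, m3 on Ω, max_{A⊆Ω} |q_{m1 ⊚∩ m3}(A) − q_{m2 ⊚∩ m3}(A)| ≤ max_{A⊆Ω} |q_{m1}(A) − q_{m2}(A)|. Consequently the L_∞ norm based distance between commonality functions is 1-Lipschitz with respect to conjunctive combination with a fixed mass function. -/
open Finset

/-- A mass function on a finite frame `Ω`: nonnegative and sums to one over all subsets. -/
def IsMass {Ω : Type*} [Fintype Ω] (m : Finset Ω → ℝ) : Prop :=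
  (∀ A, 0 ≤ m A) ∧ ∑ A : Finset Ω, m A = 1

/-- Commonality (inclusion functional): `q m A = ∑_{E ⊇ A} m E`. -/
def commonality {Ω : Type*} [Fintype Ω] [DecidableEq Ω] (m : Finset Ω → ℝ) (A : Finset Ω) : ℝ :=
  ∑ E : Finset Ω, if A ⊆ E then m E else 0

/-- Plausibility (hitting functional): `pl m A = ∑_{E ∩ A ≠ ∅} m E`. -/
def plaus {Ω : Type*} [Fintype Ω] [DecidableEq Ω] (m : Finset Ω → ℝ) (A : Finset Ω) : ℝ :=
  ∑ E : Finset Ω, if E ∩ A ≠ ∅ then m E else 0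

/-- Implicability: `b m A = ∑_{E ⊆ A} m E`. -/
def implic {Ω : Type*} [Fintype Ω] [DecidableEq Ω] (m : Finset Ω → ℝ) (A : Finset Ω) : ℝ :=
  ∑ E : Finset Ω, if E ⊆ A then m E else 0

/-- Conjunctive combination: `(m1 ⊚∩ m2)(E) = ∑_{A ∩ B = E} m1 A * m2 B`. -/
def conjC {Ω : Type*} [Fintype Ω] [DecidableEq Ω] (m1 m2 : Finset Ω → ℝ) (E : Finset Ω) : ℝ :=
  ∑ A : Finset Ω, ∑ B : Finset Ω, if A ∩ B = E then m1 A * m2 B else 0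

/-- Disjunctive combination: `(m1 ⊚∪ m2)(E) = ∑_{A ∪ B = E} m1 A * m2 B`. -/
def disjC {Ω : Type*} [Fintype Ω] [DecidableEq Ω] (m1 m2 : Finset Ω → ℝ) (E : Finset Ω) : ℝ :=
  ∑ A : Finset Ω, ∑ B : Finset Ω, if A ∪ B = E then m1 A * m2 B else 0

/-- Categorical mass function `m_A`. -/
def categorical {Ω : Type*} [Fintype Ω] [DecidableEq Ω] (A : Finset Ω) : Finset Ω → ℝ :=
  fun E => if E = A then 1 else 0


lemma commonality_conjC {Ω : Type*} [Fintype Ω] [DecidableEq Ω]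
    (m1 m3 : Finset Ω → ℝ) (A : Finset Ω) :
    commonality (conjC m1 m3) A = commonality m1 A * commonality m3 A := by
  unfold commonality conjC
  rw [Finset.sum_mul_sum]
  have key : ∀ E : Finset Ω,
      (if A ⊆ E then ∑ B : Finset Ω, ∑ C : Finset Ω, (if B ∩ C = E then m1 B * m3 C else 0) else 0)
      = ∑ B : Finset Ω, ∑ C : Finset Ω, if B ∩ C = E then (if A ⊆ E then m1 B * m3 C else 0) else 0 := by
    intro E
    split_ifs with h <;> simp
  simp only [key]
  rw [Finset.sum_comm]
  refine Finset.sum_congr rfl fun B _ => ?_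
  rw [Finset.sum_comm]
  refine Finset.sum_congr rfl fun C _ => ?_
  rw [Finset.sum_ite_eq (Finset.univ : Finset (Finset Ω)) (B ∩ C)
    (fun E => if A ⊆ E then m1 B * m3 C else 0)]
  simp only [Finset.subset_inter_iff, ite_and, mul_ite, ite_mul, mul_zero, zero_mul]
  split_ifs with h' <;> simp_all

lemma commonality_nonneg {Ω : Type*} [Fintype Ω] [DecidableEq Ω]
    (m : Finset Ω → ℝ) (h : IsMass m) (A : Finset Ω) : 0 ≤ commonality m A :=
  Finset.sum_nonneg fun E _ => by split_ifs; exacts [h.1 E, le_refl 0]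

lemma commonality_le_one {Ω : Type*} [Fintype Ω] [DecidableEq Ω]
    (m : Finset Ω → ℝ) (h : IsMass m) (A : Finset Ω) : commonality m A ≤ 1 := by
  rw [← h.2]
  exact Finset.sum_le_sum fun E _ => by split_ifs with hE; exacts [le_refl _, h.1 E]

/-- For all mass functions `m1, m2, m3`,
`max_{A⊆Ω} |q_{m1 ⊚∩ m3}(A) − q_{m2 ⊚∩ m3}(A)| ≤ max_{A⊆Ω} |q_{m1}(A) − q_{m2}(A)|`,
i.e. the `L_∞` distance between commonalities is 1-Lipschitz w.r.t. conjunctive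
combination with a fixed mass function. -/
theorem linf_commonality_conj_nonexpansive {Ω : Type*} [Fintype Ω] [DecidableEq Ω]
    (m1 m2 m3 : Finset Ω → ℝ) (h1 : IsMass m1) (h2 : IsMass m2) (h3 : IsMass m3) :
    (Finset.univ : Finset (Finset Ω)).sup' Finset.univ_nonempty
        (fun A => |commonality (conjC m1 m3) A - commonality (conjC m2 m3) A|) ≤
      (Finset.univ : Finset (Finset Ω)).sup' Finset.univ_nonempty
        (fun A => |commonality m1 A - commonality m2 A|) := by
  apply Finset.sup'_le
  intro A _
  rw [commonality_conjC, commonality_conjC, ← sub_mul, abs_mul,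
    abs_of_nonneg (commonality_nonneg m3 h3 A)]
  calc |commonality m1 A - commonality m2 A| * commonality m3 A
      ≤ |commonality m1 A - commonality m2 A| * 1 :=
        mul_le_mul_of_nonneg_left (commonality_le_one m3 h3 A) (abs_nonneg _)
    _ = |commonality m1 A - commonality m2 A| := mul_one _
    _ ≤ _ := Finset.le_sup' (fun A => |commonality m1 A - commonality m2 A|) (Finset.mem_univ A)
end

section
/- For all mass functions m1, m2, m3 on Ω, max_{A⊆Ω} |pl_{m1 ⊚∪ m3}(A) − pl_{m2 ⊚∪ m3}(A)| ≤ max_{A⊆Ω} |pl_{m1}(A) − pl_{m2}(A)|. Consequently the L_∞ norm based distance between plausibility functions is 1-Lipschitz with respect to disjunctive combination with a fixed mass function. -/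
open Finset

lemma plaus_eq {Ω : Type*} [Fintype Ω] [DecidableEq Ω] (m : Finset Ω → ℝ) (A : Finset Ω) :
    plaus m A = (∑ E : Finset Ω, m E) - implic m Aᶜ := by
  unfold plaus implic
  rw [← Finset.sum_sub_distrib]
  apply Finset.sum_congr rfl
  intro E _
  have : E ∩ A ≠ ∅ ↔ ¬ (E ⊆ Aᶜ) := by
    constructor
    · intro h hsub
      apply h
      ext x; simp only [Finset.mem_inter, Finset.notMem_empty, iff_false]
      rintro ⟨hE, hA⟩
      exact (Finset.mem_compl.mp (hsub hE)) hA
    · intro h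
      intro he
      apply h
      intro x hx
      rw [Finset.mem_compl]
      intro hxA
      have : x ∈ E ∩ A := Finset.mem_inter.mpr ⟨hx, hxA⟩
      simp [he] at this
  split_ifs with h1 h2 h2 <;> simp_all

lemma implic_disjC {Ω : Type*} [Fintype Ω] [DecidableEq Ω] (m1 m3 : Finset Ω → ℝ) (A : Finset Ω) :
    implic (disjC m1 m3) A = implic m1 A * implic m3 A := by
  unfold implic disjC
  rw [Finset.sum_mul_sum]
  have key : ∀ B C : Finset Ω,
      (∑ E : Finset Ω, if E ⊆ A then (if B ∪ C = E then m1 B * m3 C else 0) else 0)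
        = (if B ⊆ A then m1 B else 0) * (if C ⊆ A then m3 C else 0) := by
    intro B C
    rw [Finset.sum_eq_single (B ∪ C)]
    · split_ifs with h h1 h2 h1 h2 <;> simp_all [Finset.union_subset_iff]
    · intro b _ hb; split_ifs <;> simp_all
    · simp
  calc (∑ E : Finset Ω, if E ⊆ A then (∑ B : Finset Ω, ∑ C : Finset Ω, if B ∪ C = E then m1 B * m3 C else 0) else 0)
      = ∑ E : Finset Ω, ∑ B : Finset Ω, ∑ C : Finset Ω, if E ⊆ A then (if B ∪ C = E then m1 B * m3 C else 0) else 0 := by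
        apply Finset.sum_congr rfl; intro E _
        split_ifs with h <;> simp
    _ = ∑ B : Finset Ω, ∑ C : Finset Ω, ∑ E : Finset Ω, if E ⊆ A then (if B ∪ C = E then m1 B * m3 C else 0) else 0 := by
        rw [Finset.sum_comm]; apply Finset.sum_congr rfl; intro B _; rw [Finset.sum_comm]
    _ = ∑ B : Finset Ω, ∑ C : Finset Ω, (if B ⊆ A then m1 B else 0) * (if C ⊆ A then m3 C else 0) := by
        apply Finset.sum_congr rfl; intro B _; apply Finset.sum_congr rfl; intro C _; exact key B C

lemma implic_nonneg {Ω : Type*} [Fintype Ω] [DecidableEq Ω] (m : Finset Ω → ℝ) (h : IsMass m)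
    (A : Finset Ω) : 0 ≤ implic m A := by
  apply Finset.sum_nonneg; intro E _; split_ifs; exacts [h.1 E, le_refl 0]

lemma implic_le_one {Ω : Type*} [Fintype Ω] [DecidableEq Ω] (m : Finset Ω → ℝ) (h : IsMass m)
    (A : Finset Ω) : implic m A ≤ 1 := by
  rw [← h.2]; apply Finset.sum_le_sum; intro E _; split_ifs; exacts [le_refl _, h.1 E]

lemma implic_univ {Ω : Type*} [Fintype Ω] [DecidableEq Ω] (m : Finset Ω → ℝ) :
    implic m (Finset.univ) = ∑ E : Finset Ω, m E := by
  unfold implic; apply Finset.sum_congr rfl; intro E _; simp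


/-- For all mass functions `m1, m2, m3`,
`max_{A⊆Ω} |pl_{m1 ⊚∪ m3}(A) − pl_{m2 ⊚∪ m3}(A)| ≤ max_{A⊆Ω} |pl_{m1}(A) − pl_{m2}(A)|`,
i.e. the `L_∞` distance between plausibilities is 1-Lipschitz w.r.t. disjunctive
combination with a fixed mass function. -/
theorem linf_plaus_disj_nonexpansive {Ω : Type*} [Fintype Ω] [DecidableEq Ω]
    (m1 m2 m3 : Finset Ω → ℝ) (h1 : IsMass m1) (h2 : IsMass m2) (h3 : IsMass m3) :
    (Finset.univ : Finset (Finset Ω)).sup' Finset.univ_nonempty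
        (fun A => |plaus (disjC m1 m3) A - plaus (disjC m2 m3) A|) ≤
      (Finset.univ : Finset (Finset Ω)).sup' Finset.univ_nonempty
        (fun A => |plaus m1 A - plaus m2 A|) := by
  apply Finset.sup'_le
  intro A _
  have key : |plaus (disjC m1 m3) A - plaus (disjC m2 m3) A| ≤ |plaus m1 A - plaus m2 A| := by
    rw [plaus_eq, plaus_eq, plaus_eq m1, plaus_eq m2, implic_disjC, implic_disjC, h1.2, h2.2]
    have e1 : ((∑ E : Finset Ω, disjC m1 m3 E) - implic m1 Aᶜ * implic m3 Aᶜ) -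
        ((∑ E : Finset Ω, disjC m2 m3 E) - implic m2 Aᶜ * implic m3 Aᶜ) =
        (implic m2 Aᶜ - implic m1 Aᶜ) * implic m3 Aᶜ := by
      have s1 : ∑ E : Finset Ω, disjC m1 m3 E = 1 := by
        rw [← implic_univ, implic_disjC, implic_univ, implic_univ, h1.2, h3.2, one_mul]
      have s2 : ∑ E : Finset Ω, disjC m2 m3 E = 1 := by
        rw [← implic_univ, implic_disjC, implic_univ, implic_univ, h2.2, h3.2, one_mul]
      rw [s1, s2]; ring
    rw [e1, abs_mul]
    have : |1 - implic m1 Aᶜ - (1 - implic m2 Aᶜ)| = |implic m2 Aᶜ - implic m1 Aᶜ| := by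
      congr 1; ring
    rw [this]
    calc |implic m2 Aᶜ - implic m1 Aᶜ| * |implic m3 Aᶜ|
        ≤ |implic m2 Aᶜ - implic m1 Aᶜ| * 1 := by
          apply mul_le_mul_of_nonneg_left _ (abs_nonneg _)
          rw [abs_of_nonneg (implic_nonneg m3 h3 Aᶜ)]
          exact implic_le_one m3 h3 Aᶜ
      _ = |implic m2 Aᶜ - implic m1 Aᶜ| := mul_one _
  exact key.trans (Finset.le_sup' (fun A => |plaus m1 A - plaus m2 A|) (Finset.mem_univ A))
end
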